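/- arXiv:1907.04538 — 4 statements merged into one kernel-verified Lean document; each statement's English description precedes it below -/
import Mathlib

section
/- Let σ ∈ ℝ, ρ > 0, α > 0, β > 0, and 0 < a < b. If ψ : ℝ → ℝ is continuous on [a,b], then the generalized substantial fractional integral satisfies the semigroup property: for all t ∈ [a,b], (σI_a^{α,ρ} (σI_a^{β,ρ} ψ))(t) = (σI_a^{α+β,ρ} ψ)(t). -/
open Real MeasureTheory Set Filter

/-- The first-order generalized substantial differential operator
`(σD^{1,ρ} f)(t) = (t^{1-ρ}/ρ)·f'(t) + σ·f(t)`. Its `m`-fold composition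
`(subD σ ρ)^[m]` is the operator `σD^{m,ρ}`; `subD 0 ρ` iterated gives `D^{m,ρ}`. -/
noncomputable def subD (σ ρ : ℝ) (f : ℝ → ℝ) : ℝ → ℝ :=
  fun t => t ^ (1 - ρ) / ρ * deriv f t + σ * f t

/-- The generalized substantial fractional integral
`(σI_a^{α,ρ} ψ)(t) = (ρ/Γ(α)) ∫_a^t s^{ρ-1} (t^ρ−s^ρ)^{α-1} e^{-σ(t^ρ−s^ρ)} ψ(s) ds`. -/
noncomputable def subI (σ ρ α a : ℝ) (ψ : ℝ → ℝ) : ℝ → ℝ :=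
  fun t => ρ / Real.Gamma α *
    ∫ s in a..t, s ^ (ρ - 1) * (t ^ ρ - s ^ ρ) ^ (α - 1) *
      Real.exp (-σ * (t ^ ρ - s ^ ρ)) * ψ s

/-- The (modified) Katugampola fractional integral
`(I_a^{α,ρ} ψ)(t) = (ρ/Γ(α)) ∫_a^t s^{ρ-1} (t^ρ−s^ρ)^{α-1} ψ(s) ds`. -/
noncomputable def katI (ρ α a : ℝ) (ψ : ℝ → ℝ) : ℝ → ℝ :=
  fun t => ρ / Real.Gamma α *
    ∫ s in a..t, s ^ (ρ - 1) * (t ^ ρ - s ^ ρ) ^ (α - 1) * ψ s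

/-! The substitution `u = s^ρ - a^ρ` writes `σI_a^{γ,ρ} ψ (t)` as `e^{-σX}` times the
Riemann–Liouville integral of order `γ` of `g(u) = e^{σu} ψ((u + a^ρ)^{1/ρ})` at
`X = t^ρ - a^ρ`, with the same `g` for every order `γ`. The semigroup property is thus that of
Riemann–Liouville integrals, which follows from Fubini on the triangle `0 < w < v < X` and the
Beta integral `∫_w^X (X-v)^{α-1} (v-w)^{β-1} dv = B(α,β) (X-w)^{α+β-1}`. -/

theorem integral_rpow_mul_sub_rpow {α β y : ℝ} (hα : 0 < α) (hβ : 0 < β) (hy : 0 < y) :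
    ∫ t in (0:ℝ)..y, t ^ (α - 1) * (y - t) ^ (β - 1)
      = Gamma α * Gamma β / Gamma (α + β) * y ^ (α + β - 1) := by
  have hcast : ∀ t ∈ uIcc (0:ℝ) y, ((t ^ (α - 1) * (y - t) ^ (β - 1) : ℝ) : ℂ)
      = (t : ℂ) ^ ((α : ℂ) - 1) * ((y : ℂ) - t) ^ ((β : ℂ) - 1) := by
    intro t ht
    rw [uIcc_of_le hy.le] at ht
    push_cast [Complex.ofReal_cpow ht.1, Complex.ofReal_cpow (sub_nonneg.2 ht.2)]
    rfl
  have hbeta : Complex.betaIntegral α β = (Gamma α * Gamma β / Gamma (α + β) : ℝ) := by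
    have hne : Complex.Gamma ((α : ℂ) + β) ≠ 0 :=
      Complex.Gamma_ne_zero_of_re_pos (by simp; positivity)
    push_cast [← Complex.Gamma_ofReal]
    rw [eq_div_iff hne, mul_comm, ← Complex.Gamma_mul_Gamma_eq_betaIntegral
      (by simpa using hα) (by simpa using hβ)]
  apply Complex.ofReal_injective
  rw [← intervalIntegral.integral_ofReal, intervalIntegral.integral_congr hcast,
    Complex.betaIntegral_scaled _ _ hy, hbeta]
  push_cast [Complex.ofReal_cpow hy.le]
  ring

theorem integral_sub_rpow_mul_rpow_sub {α β w x : ℝ} (hα : 0 < α) (hβ : 0 < β) (hwx : w < x) :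
    ∫ v in w..x, (x - v) ^ (α - 1) * (v - w) ^ (β - 1)
      = Gamma α * Gamma β / Gamma (α + β) * (x - w) ^ (α + β - 1) := by
  have hshift := intervalIntegral.integral_comp_sub_right
    (fun u => u ^ (β - 1) * (x - w - u) ^ (α - 1)) w (a := w) (b := x)
  simp only [sub_self, sub_sub_sub_cancel_right] at hshift
  rw [intervalIntegral.integral_congr (fun v _ => mul_comm _ _), hshift,
    integral_rpow_mul_sub_rpow hβ hα (sub_pos.2 hwx), add_comm β, mul_comm (Gamma β)]

section Dirichlet

variable {α β X : ℝ}

theorem integral_Ioo_ite_sub_rpow_mul_rpow_sub (hα : 0 < α) (hβ : 0 < β) {w : ℝ}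
    (hw : w ∈ Ioo 0 X) :
    ∫ v in Ioo 0 X, (if w < v then (X - v) ^ (α - 1) * (v - w) ^ (β - 1) else 0)
      = Gamma α * Gamma β / Gamma (α + β) * (X - w) ^ (α + β - 1) := by
  have hset : Ioo 0 X ∩ Ioi w = Ioo w X := by
    ext v; simp only [mem_inter_iff, mem_Ioo, mem_Ioi]; grind
  rw [← integral_sub_rpow_mul_rpow_sub hα hβ hw.2, intervalIntegral.integral_of_le hw.2.le,
    integral_Ioc_eq_integral_Ioo, ← hset, ← setIntegral_indicator measurableSet_Ioi]
  rfl

theorem integrable_ite_sub_rpow_mul_rpow_sub (hα : 0 < α) (hβ : 0 < β) :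
    Integrable (fun p : ℝ × ℝ => if p.2 < p.1 then (X - p.1) ^ (α - 1) * (p.1 - p.2) ^ (β - 1)
      else 0) ((volume.restrict (Ioo 0 X)).prod (volume.restrict (Ioo 0 X))) := by
  have hmeas : Measurable (fun p : ℝ × ℝ =>
      if p.2 < p.1 then (X - p.1) ^ (α - 1) * (p.1 - p.2) ^ (β - 1) else 0) :=
    Measurable.ite (measurableSet_lt measurable_snd measurable_fst) (by fun_prop)
      measurable_const
  have hB : 0 < Gamma α * Gamma β / Gamma (α + β) := by positivity
  rw [integrable_prod_iff' hmeas.aestronglyMeasurable]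
  constructor
  · refine ae_restrict_of_forall_mem measurableSet_Ioo fun w hw => ?_
    refine Integrable.of_integral_ne_zero ?_
    rw [integral_Ioo_ite_sub_rpow_mul_rpow_sub hα hβ hw]
    exact (mul_pos hB (rpow_pos_of_pos (sub_pos.2 hw.2) _)).ne'
  · have hrpow : IntegrableOn (fun w => (X - w) ^ (α + β - 1)) (Ioo 0 X) := by
      have := (intervalIntegral.intervalIntegrable_rpow' (r := α + β - 1)
        (by linarith)).comp_sub_left X (a := X) (b := 0)
      simp only [sub_self, sub_zero] at this
      exact this.def'.mono_set (Ioo_subset_Ioc_self.trans Ioc_subset_uIoc)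
    refine (hrpow.const_mul (Gamma α * Gamma β / Gamma (α + β))).congr ?_
    refine ae_restrict_of_forall_mem measurableSet_Ioo fun w hw => ?_
    dsimp only
    rw [← integral_Ioo_ite_sub_rpow_mul_rpow_sub hα hβ hw]
    refine setIntegral_congr_fun measurableSet_Ioo fun v hv => (norm_of_nonneg ?_).symm
    split_ifs with h
    · exact mul_nonneg (rpow_nonneg (sub_nonneg.2 hv.2.le) _) (rpow_nonneg (sub_nonneg.2 h.le) _)
    · exact le_rfl

theorem integral_sub_rpow_mul_integral_sub_rpow_mul (hα : 0 < α) (hβ : 0 < β) (hX : 0 ≤ X)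
    {g : ℝ → ℝ} (hg : ContinuousOn g (Icc 0 X)) :
    ∫ v in (0:ℝ)..X, (X - v) ^ (α - 1) * ∫ w in (0:ℝ)..v, (v - w) ^ (β - 1) * g w
      = Gamma α * Gamma β / Gamma (α + β) * ∫ w in (0:ℝ)..X, (X - w) ^ (α + β - 1) * g w := by
  set μ := volume.restrict (Ioo 0 X)
  let F : ℝ → ℝ → ℝ := fun v w =>
    (if w < v then (X - v) ^ (α - 1) * (v - w) ^ (β - 1) else 0) * g w
  have hF : Integrable (Function.uncurry F) (μ.prod μ) := by
    obtain ⟨M, hM⟩ := isCompact_Icc.exists_bound_of_continuousOn hg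
    refine (integrable_ite_sub_rpow_mul_rpow_sub hα hβ).mul_bdd (c := M)
      ((hg.mono Ioo_subset_Icc_self).aestronglyMeasurable measurableSet_Ioo).comp_snd ?_
    rw [Measure.prod_restrict]
    exact ae_restrict_of_forall_mem (measurableSet_Ioo.prod measurableSet_Ioo)
      fun p hp => hM p.2 (Ioo_subset_Icc_self hp.2)
  have inner_w : ∀ v ∈ Ioo 0 X,
      ∫ w, F v w ∂μ = (X - v) ^ (α - 1) * ∫ w in (0:ℝ)..v, (v - w) ^ (β - 1) * g w := by
    intro v hv
    have hset : Ioo 0 X ∩ Iio v = Ioo 0 v := by rw [Ioo_inter_Iio, min_eq_right hv.2.le]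
    rw [intervalIntegral.integral_of_le hv.1.le, integral_Ioc_eq_integral_Ioo,
      ← integral_const_mul, ← hset, ← setIntegral_indicator measurableSet_Iio]
    refine setIntegral_congr_fun measurableSet_Ioo fun w _ => ?_
    simp only [F, indicator_apply, mem_Iio]
    split_ifs <;> ring
  have inner_v : ∀ w ∈ Ioo 0 X, ∫ v, F v w ∂μ
      = Gamma α * Gamma β / Gamma (α + β) * ((X - w) ^ (α + β - 1) * g w) := by
    intro w hw
    rw [integral_mul_const, integral_Ioo_ite_sub_rpow_mul_rpow_sub hα hβ hw, mul_assoc]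
  calc ∫ v in (0:ℝ)..X, (X - v) ^ (α - 1) * ∫ w in (0:ℝ)..v, (v - w) ^ (β - 1) * g w
      = ∫ v, ∫ w, F v w ∂μ ∂μ := by
        rw [intervalIntegral.integral_of_le hX, integral_Ioc_eq_integral_Ioo]
        exact setIntegral_congr_fun measurableSet_Ioo fun v hv => (inner_w v hv).symm
    _ = ∫ w, ∫ v, F v w ∂μ ∂μ := integral_integral_swap hF
    _ = _ := by
        rw [intervalIntegral.integral_of_le hX, integral_Ioc_eq_integral_Ioo,
          ← integral_const_mul]
        exact setIntegral_congr_fun measurableSet_Ioo inner_v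

end Dirichlet

noncomputable def riemannLiouville (γ : ℝ) (g : ℝ → ℝ) (x : ℝ) : ℝ :=
  (Gamma γ)⁻¹ * ∫ w in (0:ℝ)..x, (x - w) ^ (γ - 1) * g w

theorem riemannLiouville_congr {γ x : ℝ} {f g : ℝ → ℝ} (hx : 0 ≤ x) (h : EqOn f g (Icc 0 x)) :
    riemannLiouville γ f x = riemannLiouville γ g x := by
  unfold riemannLiouville
  congr 1
  refine intervalIntegral.integral_congr fun w hw => ?_
  rw [uIcc_of_le hx] at hw
  simp only [h hw]

theorem riemannLiouville_riemannLiouville {α β X : ℝ} (hα : 0 < α) (hβ : 0 < β) (hX : 0 ≤ X)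
    {g : ℝ → ℝ} (hg : ContinuousOn g (Icc 0 X)) :
    riemannLiouville α (riemannLiouville β g) X = riemannLiouville (α + β) g X := by
  have hΓα := (Gamma_pos_of_pos hα).ne'
  have hΓβ := (Gamma_pos_of_pos hβ).ne'
  unfold riemannLiouville
  simp_rw [mul_left_comm _ (Gamma β)⁻¹]
  rw [intervalIntegral.integral_const_mul, integral_sub_rpow_mul_integral_sub_rpow_mul hα hβ hX hg]
  field_simp

theorem mapsTo_rpow_inv_add_rpow {ρ a t : ℝ} (hρ : 0 < ρ) (ha : 0 ≤ a) (hat : a ≤ t) :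
    MapsTo (fun v => (v + a ^ ρ) ^ ρ⁻¹) (Icc 0 (t ^ ρ - a ^ ρ)) (Icc a t) := by
  rintro v ⟨hv0, hvX⟩
  constructor
  · calc a = (a ^ ρ) ^ ρ⁻¹ := (rpow_rpow_inv ha hρ.ne').symm
      _ ≤ (v + a ^ ρ) ^ ρ⁻¹ := by gcongr; linarith
  · calc (v + a ^ ρ) ^ ρ⁻¹ ≤ (t ^ ρ) ^ ρ⁻¹ := by gcongr; linarith
      _ = t := rpow_rpow_inv (ha.trans hat) hρ.ne'

theorem subI_eq_exp_mul_riemannLiouville {σ ρ γ a t : ℝ} (hρ : 0 < ρ) (ha : 0 ≤ a) (hat : a ≤ t)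
    (ψ : ℝ → ℝ) :
    subI σ ρ γ a ψ t = exp (-σ * (t ^ ρ - a ^ ρ)) *
      riemannLiouville γ (fun v => exp (σ * v) * ψ ((v + a ^ ρ) ^ ρ⁻¹)) (t ^ ρ - a ^ ρ) := by
  set G : ℝ → ℝ := fun u => (t ^ ρ - u) ^ (γ - 1) * exp (-σ * (t ^ ρ - u)) * ψ (u ^ ρ⁻¹)
  have hsubst : ∫ s in a..t, s ^ (ρ - 1) * (t ^ ρ - s ^ ρ) ^ (γ - 1) *
      exp (-σ * (t ^ ρ - s ^ ρ)) * ψ s = ρ⁻¹ * ∫ u in a ^ ρ..t ^ ρ, G u := by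
    have hpos : ∀ s ∈ Ioo (min a t) (max a t), 0 < s := fun s hs =>
      ha.trans_lt ((min_eq_left hat).symm ▸ hs.1)
    rw [← intervalIntegral.integral_comp_mul_deriv_of_deriv_nonneg (f := fun s => s ^ ρ)
      (f' := fun s => ρ * s ^ (ρ - 1)) (continuous_rpow_const hρ.le).continuousOn
      (fun s hs => hasDerivAt_rpow_const (Or.inl (hpos s hs).ne'))
      (fun s hs => by have := hpos s hs; positivity), ← intervalIntegral.integral_const_mul]
    refine intervalIntegral.integral_congr fun s hs => ?_
    rw [uIcc_of_le hat] at hs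
    simp only [G, Function.comp, rpow_rpow_inv (ha.trans hs.1) hρ.ne']
    field_simp
  have hshift : ∫ u in a ^ ρ..t ^ ρ, G u = exp (-σ * (t ^ ρ - a ^ ρ)) *
      ∫ v in (0:ℝ)..(t ^ ρ - a ^ ρ), (t ^ ρ - a ^ ρ - v) ^ (γ - 1) *
        (exp (σ * v) * ψ ((v + a ^ ρ) ^ ρ⁻¹)) := by
    have := intervalIntegral.integral_comp_add_right G (a ^ ρ) (a := 0) (b := t ^ ρ - a ^ ρ)
    rw [zero_add, sub_add_cancel] at this
    rw [← this, ← intervalIntegral.integral_const_mul]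
    refine intervalIntegral.integral_congr fun v _ => ?_
    simp only [G]
    rw [show t ^ ρ - (v + a ^ ρ) = t ^ ρ - a ^ ρ - v by ring,
      show -σ * (t ^ ρ - a ^ ρ - v) = -σ * (t ^ ρ - a ^ ρ) + σ * v by ring, exp_add]
    ring
  rw [subI, riemannLiouville, hsubst, hshift]
  field_simp

theorem stmt5_general (σ ρ α β a b : ℝ) (hρ : 0 < ρ) (hα : 0 < α) (hβ : 0 < β)
    (ha : 0 < a)
    (ψ : ℝ → ℝ) (hψ : ContinuousOn ψ (Set.Icc a b)) :
    ∀ t ∈ Set.Icc a b,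
      subI σ ρ α a (subI σ ρ β a ψ) t = subI σ ρ (α + β) a ψ t := by
  rintro t ⟨hat, htb⟩
  have hX : 0 ≤ t ^ ρ - a ^ ρ := sub_nonneg.2 (rpow_le_rpow ha.le hat hρ.le)
  have hτ := mapsTo_rpow_inv_add_rpow hρ ha.le hat
  set g : ℝ → ℝ := fun v => exp (σ * v) * ψ ((v + a ^ ρ) ^ ρ⁻¹)
  have hg : ContinuousOn g (Icc 0 (t ^ ρ - a ^ ρ)) :=
    (continuous_exp.comp (continuous_const_mul σ)).continuousOn.mul <|
      hψ.comp ((continuous_rpow_const (inv_nonneg.2 hρ.le)).comp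
        (continuous_add_const _)).continuousOn (hτ.mono_right (Icc_subset_Icc_right htb))
  have hinner : EqOn (fun v => exp (σ * v) * subI σ ρ β a ψ ((v + a ^ ρ) ^ ρ⁻¹))
      (riemannLiouville β g) (Icc 0 (t ^ ρ - a ^ ρ)) := fun v hv => by
    have hav : a ≤ (v + a ^ ρ) ^ ρ⁻¹ := (hτ hv).1
    dsimp only
    rw [subI_eq_exp_mul_riemannLiouville hρ ha.le hav,
      rpow_inv_rpow (by linarith [hv.1, rpow_nonneg ha.le ρ]) hρ.ne', add_sub_cancel_right,
      ← mul_assoc, ← exp_add, neg_mul, add_neg_cancel, exp_zero, one_mul]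
  rw [subI_eq_exp_mul_riemannLiouville hρ ha.le hat, subI_eq_exp_mul_riemannLiouville hρ ha.le hat,
    riemannLiouville_congr hX hinner, riemannLiouville_riemannLiouville hα hβ hX hg]

theorem stmt5 (σ ρ α β a b : ℝ) (hρ : 0 < ρ) (hα : 0 < α) (hβ : 0 < β)
    (ha : 0 < a) (hab : a < b)
    (ψ : ℝ → ℝ) (hψ : ContinuousOn ψ (Set.Icc a b)) :
    ∀ t ∈ Set.Icc a b,
      subI σ ρ α a (subI σ ρ β a ψ) t = subI σ ρ (α + β) a ψ t :=
  stmt5_general σ ρ α β a b hρ hα hβ ha ψ hψ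
end

section
/- Let σ ∈ ℝ, ρ > 0, α > 0 with m − 1 < α ≤ m, and 0 < a < b. If ψ : ℝ → ℝ is m-times continuously differentiable on [a,b], then for all t ∈ [a,b], the Caputo-type generalized substantial fractional derivative satisfies (σ^cD_a^{α,ρ} ψ)(t) = e^{-σ t^ρ} · (^cD_a^{α,ρ} (s ↦ e^{σ s^ρ} ψ(s)))(t), where ^cD_a^{α,ρ} φ = I_a^{m-α,ρ}(D^{m,ρ} φ) is the Caputo-type Katugampola fractional derivative. -/
open Real MeasureTheory Set Filter

/-!
Conjugation by the weight `e^{σ s^ρ}` turns `σD^{1,ρ}` into `D^{1,ρ}`: the derivative of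
`e^{-σ s^ρ}` contributes `-σ ρ s^{ρ-1} e^{-σ s^ρ}`, which the factor `s^{1-ρ}/ρ` turns into exactly
the `-σ` cancelling the `σ f` term. Iterating gives `σD^{m,ρ} ψ = e^{-σ t^ρ} D^{m,ρ}(e^{σ s^ρ} ψ)`
on the interior of `[a, b]`, and the kernel `e^{-σ(t^ρ - s^ρ)}` of `σI^{α,ρ}` absorbs the remaining
weight `e^{-σ s^ρ}` into the constant `e^{-σ t^ρ}`.
-/

lemma subD_exp_mul {σ ρ s : ℝ} (hρ : ρ ≠ 0) (hs : 0 < s) {g : ℝ → ℝ}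
    (hg : DifferentiableAt ℝ g s) :
    subD σ ρ (fun u => exp (-σ * u ^ ρ) * g u) s = exp (-σ * s ^ ρ) * subD 0 ρ g s := by
  have hpow : HasDerivAt (fun u : ℝ => u ^ ρ) (ρ * s ^ (ρ - 1)) s :=
    hasDerivAt_rpow_const (Or.inl hs.ne')
  have hprod : HasDerivAt (fun u => exp (-σ * u ^ ρ) * g u)
      (exp (-σ * s ^ ρ) * (-σ * (ρ * s ^ (ρ - 1))) * g s + exp (-σ * s ^ ρ) * deriv g s) s :=
    (hpow.const_mul (-σ)).exp.mul hg.hasDerivAt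
  have hcancel : s ^ (1 - ρ) * s ^ (ρ - 1) = 1 := by
    rw [← rpow_add hs]; norm_num
  simp only [subD, hprod.deriv]
  field_simp
  linear_combination (-(σ * ρ * g s)) * hcancel

lemma ContDiffOn.subD_zero {ρ : ℝ} {S : Set ℝ} (hS : IsOpen S) (hpos : ∀ s ∈ S, 0 < s)
    {k : ℕ} {g : ℝ → ℝ} (hg : ContDiffOn ℝ (k + 1) g S) : ContDiffOn ℝ k (subD 0 ρ g) S := by
  have hweight : ContDiffOn ℝ k (fun t : ℝ => t ^ (1 - ρ) / ρ) S := fun t ht =>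
    ((contDiffAt_rpow_const_of_ne (hpos t ht).ne').div_const ρ).contDiffWithinAt
  have hsubD : subD 0 ρ g = fun t => t ^ (1 - ρ) / ρ * deriv g t := by
    funext t
    simp [subD]
  rw [hsubD]
  exact hweight.mul (hg.deriv_of_isOpen hS le_rfl)

lemma eqOn_iterate_subD_exp_mul {σ ρ : ℝ} (hρ : ρ ≠ 0) {S : Set ℝ} (hS : IsOpen S)
    (hpos : ∀ s ∈ S, 0 < s) (k : ℕ) {f g : ℝ → ℝ} (hg : ContDiffOn ℝ k g S)
    (hfg : EqOn f (fun s => exp (-σ * s ^ ρ) * g s) S) :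
    EqOn ((subD σ ρ)^[k] f) (fun s => exp (-σ * s ^ ρ) * (subD 0 ρ)^[k] g s) S := by
  induction k generalizing f g with
  | zero => simpa using hfg
  | succ k ih =>
    have hstep : EqOn (subD σ ρ f) (fun s => exp (-σ * s ^ ρ) * subD 0 ρ g s) S := by
      intro s hs
      have hnhds : f =ᶠ[nhds s] fun u => exp (-σ * u ^ ρ) * g u :=
        eventuallyEq_of_mem (hS.mem_nhds hs) hfg
      have hgs : DifferentiableAt ℝ g s :=
        (hg.contDiffAt (hS.mem_nhds hs)).differentiableAt (by simp)
      dsimp only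
      rw [← subD_exp_mul hρ (hpos s hs) hgs]
      simp only [subD, hnhds.deriv_eq, hnhds.eq_of_nhds]
    intro s hs
    rw [Function.iterate_succ_apply, Function.iterate_succ_apply]
    exact ih (hg.subD_zero hS hpos) hstep hs

lemma subI_eq_exp_mul_katI {σ ρ α a t : ℝ} (hat : a ≤ t) {φ χ : ℝ → ℝ}
    (hφχ : EqOn φ (fun s => exp (-σ * s ^ ρ) * χ s) (Ioo a t)) :
    subI σ ρ α a φ t = exp (-σ * t ^ ρ) * katI ρ α a χ t := by
  have hintegrand : EqOn
      (fun s => s ^ (ρ - 1) * (t ^ ρ - s ^ ρ) ^ (α - 1) * exp (-σ * (t ^ ρ - s ^ ρ)) * φ s)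
      (fun s => exp (-σ * t ^ ρ) * (s ^ (ρ - 1) * (t ^ ρ - s ^ ρ) ^ (α - 1) * χ s))
      (Ioo a t) := by
    intro s hs
    have hexp : exp (-σ * (t ^ ρ - s ^ ρ)) * exp (-σ * s ^ ρ) = exp (-σ * t ^ ρ) := by
      rw [← exp_add]; ring_nf
    simp only [hφχ hs]
    linear_combination (s ^ (ρ - 1) * (t ^ ρ - s ^ ρ) ^ (α - 1) * χ s) * hexp
  simp only [subI, katI, intervalIntegral.integral_of_le hat, integral_Ioc_eq_integral_Ioo,
    setIntegral_congr_fun measurableSet_Ioo hintegrand, integral_const_mul]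
  ring

theorem stmt10_general (σ ρ α a b : ℝ) (hρ : 0 < ρ) (ha : 0 < a)
    (m : ℕ)
    (ψ : ℝ → ℝ) (hψ : ContDiffOn ℝ m ψ (Set.Icc a b)) :
    ∀ t ∈ Set.Icc a b,
      subI σ ρ ((m : ℝ) - α) a ((subD σ ρ)^[m] ψ) t =
        Real.exp (-σ * t ^ ρ) *
          katI ρ ((m : ℝ) - α) a ((subD 0 ρ)^[m] (fun s => Real.exp (σ * s ^ ρ) * ψ s)) t := by
  rintro t ⟨hat, htb⟩
  have hpos : ∀ s ∈ Ioo a b, 0 < s := fun s hs => ha.trans hs.1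
  have hweighted : ContDiffOn ℝ m (fun s => exp (σ * s ^ ρ) * ψ s) (Ioo a b) := fun s hs =>
    ((contDiffAt_const.mul (contDiffAt_rpow_const_of_ne (hpos s hs).ne')).exp.contDiffWithinAt).mul
      (hψ.mono Ioo_subset_Icc_self s hs)
  have hψ_eq : EqOn ψ (fun s => exp (-σ * s ^ ρ) * (exp (σ * s ^ ρ) * ψ s)) (Ioo a b) := by
    intro s _
    simp only [← mul_assoc, ← exp_add, neg_mul, neg_add_cancel, exp_zero, one_mul]
  have hiter := eqOn_iterate_subD_exp_mul hρ.ne' isOpen_Ioo hpos m hweighted hψ_eq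
  exact subI_eq_exp_mul_katI hat (hiter.mono (Ioo_subset_Ioo_right htb))

theorem stmt10 (σ ρ α a b : ℝ) (hρ : 0 < ρ) (hα : 0 < α) (ha : 0 < a) (hab : a < b)
    (m : ℕ) (hα₁ : (m : ℝ) - 1 < α) (hα₂ : α ≤ m)
    (ψ : ℝ → ℝ) (hψ : ContDiffOn ℝ m ψ (Set.Icc a b)) :
    ∀ t ∈ Set.Icc a b,
      subI σ ρ ((m : ℝ) - α) a ((subD σ ρ)^[m] ψ) t =
        Real.exp (-σ * t ^ ρ) *
          katI ρ ((m : ℝ) - α) a ((subD 0 ρ)^[m] (fun s => Real.exp (σ * s ^ ρ) * ψ s)) t :=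
  stmt10_general σ ρ α a b hρ ha m ψ hψ
end

section
/- Let σ ∈ ℝ, ρ > 0, 0 < α < 1, β > α − 1, and 0 < a < b. Then for all t ∈ (a,b], the Riemann–Liouville-type generalized substantial fractional derivative of ψ(s) = (s^ρ − a^ρ)^β e^{-σ s^ρ} is given by (σD_a^{α,ρ} ψ)(t) = (Γ(β+1)/Γ(β−α+1)) · e^{-σ t^ρ} · (t^ρ − a^ρ)^{β-α}. -/
open Real MeasureTheory Set Filter

lemma real_beta {p q : ℝ} (hp : 0 < p) (hq : 0 < q) :
    ∫ x in (0:ℝ)..1, x ^ (p - 1) * (1 - x) ^ (q - 1) =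
      Real.Gamma p * Real.Gamma q / Real.Gamma (p + q) := by
  have h1 : (↑(∫ x in (0:ℝ)..1, x ^ (p - 1) * (1 - x) ^ (q - 1)) : ℂ) =
      Complex.betaIntegral p q := by
    rw [← intervalIntegral.integral_ofReal, Complex.betaIntegral]
    refine intervalIntegral.integral_congr fun x hx => ?_
    rw [Set.uIcc_of_le zero_le_one] at hx
    push_cast
    rw [Complex.ofReal_cpow hx.1, Complex.ofReal_cpow (by linarith [hx.2])]
    push_cast
    ring
  have h2 : Complex.betaIntegral p q =
      ↑(Real.Gamma p * Real.Gamma q / Real.Gamma (p + q)) := by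
    have hne : Complex.Gamma (↑p + ↑q) ≠ 0 := by
      apply Complex.Gamma_ne_zero_of_re_pos
      simp only [Complex.add_re, Complex.ofReal_re]
      positivity
    have h3 := Complex.Gamma_mul_Gamma_eq_betaIntegral
      (s := (p:ℂ)) (t := (q:ℂ)) (by simpa using hp) (by simpa using hq)
    have h4 : Complex.betaIntegral p q =
        Complex.Gamma p * Complex.Gamma q / Complex.Gamma (↑p + ↑q) :=
      (eq_div_iff hne).mpr (by linear_combination -h3)
    rw [h4]
    push_cast [← Complex.Gamma_ofReal]
    ring
  exact_mod_cast h1.trans h2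

lemma beta_interval {A T p q : ℝ} (hAT : A < T) (B : ℝ)
    (hB : ∫ x in (0:ℝ)..1, x ^ (p - 1) * (1 - x) ^ (q - 1) = B) :
    ∫ u in A..T, (T - u) ^ (q - 1) * (u - A) ^ (p - 1) =
      (T - A) ^ (p + q - 1) * B := by
  have hc0 : 0 < T - A := sub_pos.mpr hAT
  have key := intervalIntegral.integral_comp_mul_add
    (a := 0) (b := 1) (fun u => (T - u) ^ (q - 1) * (u - A) ^ (p - 1)) hc0.ne' A
  simp only [mul_zero, zero_add, mul_one, sub_add_cancel, smul_eq_mul] at key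
  have congr1 : (∫ x in (0:ℝ)..1, (T - ((T-A)*x + A)) ^ (q - 1) * (((T-A)*x + A) - A) ^ (p - 1))
      = (T-A)^(q-1) * (T-A)^(p-1) * ∫ x in (0:ℝ)..1, x ^ (p-1) * (1-x) ^ (q-1) := by
    rw [← intervalIntegral.integral_const_mul]
    refine intervalIntegral.integral_congr fun x hx => ?_
    rw [Set.uIcc_of_le zero_le_one] at hx
    have h1 : T - ((T-A)*x + A) = (T-A) * (1-x) := by ring
    have h2 : (T-A)*x + A - A = (T-A) * x := by ring
    rw [h1, h2, Real.mul_rpow hc0.le (by linarith [hx.2]), Real.mul_rpow hc0.le hx.1]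
    ring
  rw [congr1, hB] at key
  have := key.symm
  rw [inv_mul_eq_iff_eq_mul₀ hc0.ne'] at this
  rw [this, show p + q - 1 = 1 + (q-1) + (p-1) by ring,
    Real.rpow_add hc0, Real.rpow_add hc0, Real.rpow_one]
  ring

lemma subst_rpow {ρ a t : ℝ} (hρ : 0 < ρ) (ha : 0 < a) (hat : a < t) (f : ℝ → ℝ) :
    ∫ u in a ^ ρ..t ^ ρ, f u = ρ * ∫ s in a..t, s ^ (ρ - 1) * f (s ^ ρ) := by
  have h1 : a ^ ρ ≤ t ^ ρ := Real.rpow_le_rpow ha.le hat.le hρ.le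
  rw [intervalIntegral.integral_of_le h1, intervalIntegral.integral_of_le hat.le,
    MeasureTheory.integral_Ioc_eq_integral_Ioo, MeasureTheory.integral_Ioc_eq_integral_Ioo]
  have hmono : StrictMonoOn (fun s : ℝ => s ^ ρ) (Ioo a t) :=
    fun x hx y _ hxy => Real.rpow_lt_rpow (ha.trans hx.1).le hxy hρ
  have himg : (fun s : ℝ => s ^ ρ) '' Ioo a t = Ioo (a ^ ρ) (t ^ ρ) := by
    ext u
    constructor
    · rintro ⟨s, hs, rfl⟩
      exact ⟨Real.rpow_lt_rpow ha.le hs.1 hρ, Real.rpow_lt_rpow (ha.trans hs.1).le hs.2 hρ⟩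
    · intro hu
      have hu0 : 0 < u := lt_trans (Real.rpow_pos_of_pos ha ρ) hu.1
      refine ⟨u ^ ρ⁻¹, ⟨?_, ?_⟩, ?_⟩
      · have := Real.rpow_lt_rpow (Real.rpow_pos_of_pos ha ρ).le hu.1
          (by positivity : (0:ℝ) < ρ⁻¹)
        rwa [Real.rpow_rpow_inv ha.le hρ.ne'] at this
      · have h2 := Real.rpow_lt_rpow hu0.le hu.2 (by positivity : (0:ℝ) < ρ⁻¹)
        rwa [Real.rpow_rpow_inv (ha.trans hat).le hρ.ne'] at h2
      · exact Real.rpow_inv_rpow hu0.le hρ.ne'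
  rw [← himg, integral_image_eq_integral_abs_deriv_smul measurableSet_Ioo
    (fun x hx => (Real.hasDerivAt_rpow_const
      (Or.inl (ha.trans hx.1).ne')).hasDerivWithinAt) hmono.injOn f]
  rw [← MeasureTheory.integral_const_mul]
  refine setIntegral_congr_fun measurableSet_Ioo fun x hx => ?_
  have hx0 : 0 < x := ha.trans hx.1
  rw [smul_eq_mul, abs_of_pos (by positivity)]
  ring

lemma subI_closed (σ ρ α β a : ℝ) (hρ : 0 < ρ) (hα₁ : 0 < α) (hα₂ : α < 1)
    (hβ : α - 1 < β) (ha : 0 < a) :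
    ∀ t ∈ Set.Ioi a,
      subI σ ρ (1 - α) a (fun s => (s ^ ρ - a ^ ρ) ^ β * Real.exp (-σ * s ^ ρ)) t =
        Real.Gamma (β + 1) / Real.Gamma (β - α + 2) *
          (Real.exp (-σ * t ^ ρ) * (t ^ ρ - a ^ ρ) ^ (β - α + 1)) := by
  intro t hat
  rw [Set.mem_Ioi] at hat
  have hTA : a ^ ρ < t ^ ρ := Real.rpow_lt_rpow ha.le hat hρ
  set f : ℝ → ℝ := fun u => (t ^ ρ - u) ^ ((1 - α) - 1) * (u - a ^ ρ) ^ ((β + 1) - 1)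
    with hf
  have step1 : (∫ s in a..t, s ^ (ρ - 1) * (t ^ ρ - s ^ ρ) ^ ((1 - α) - 1) *
        Real.exp (-σ * (t ^ ρ - s ^ ρ)) * ((s ^ ρ - a ^ ρ) ^ β * Real.exp (-σ * s ^ ρ)))
      = Real.exp (-σ * t ^ ρ) * ∫ s in a..t, s ^ (ρ - 1) * f (s ^ ρ) := by
    rw [← intervalIntegral.integral_const_mul]
    refine intervalIntegral.integral_congr fun s _ => ?_
    rw [hf]
    simp only
    rw [show (β + 1) - 1 = β by ring]
    have he : Real.exp (-σ * (t ^ ρ - s ^ ρ)) * Real.exp (-σ * s ^ ρ)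
        = Real.exp (-σ * t ^ ρ) := by rw [← Real.exp_add]; congr 1; ring
    linear_combination (s ^ (ρ - 1) * (t ^ ρ - s ^ ρ) ^ (1 - α - 1) *
      (s ^ ρ - a ^ ρ) ^ β) * he
  have step2 : (∫ u in a ^ ρ..t ^ ρ, f u)
      = (t ^ ρ - a ^ ρ) ^ ((β + 1) + (1 - α) - 1) *
        (Real.Gamma (β + 1) * Real.Gamma (1 - α) / Real.Gamma ((β + 1) + (1 - α))) :=
    beta_interval hTA _ (real_beta (by linarith) (by linarith))
  have step3 := subst_rpow hρ ha hat f
  have hΓ : 0 < Real.Gamma (1 - α) := Real.Gamma_pos_of_pos (by linarith)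
  simp only [subI]
  rw [step1]
  have : (∫ s in a..t, s ^ (ρ - 1) * f (s ^ ρ)) = ρ⁻¹ * ∫ u in a ^ ρ..t ^ ρ, f u := by
    rw [step3]; field_simp
  rw [this, step2, show (β + 1) + (1 - α) - 1 = β - α + 1 by ring,
    show (β + 1) + (1 - α) = β - α + 2 by ring]
  have hΓ2 : (0:ℝ) < Real.Gamma (β - α + 2) :=
    Real.Gamma_pos_of_pos (by linarith)
  field_simp [hρ.ne', hΓ.ne', hΓ2.ne']

theorem stmt15 (σ ρ α β a b : ℝ) (hρ : 0 < ρ) (hα₁ : 0 < α) (hα₂ : α < 1)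
    (hβ : α - 1 < β) (ha : 0 < a) (hab : a < b) :
    ∀ t ∈ Set.Ioc a b,
      subD σ ρ (subI σ ρ (1 - α) a
          (fun s => (s ^ ρ - a ^ ρ) ^ β * Real.exp (-σ * s ^ ρ))) t =
        Real.Gamma (β + 1) / Real.Gamma (β - α + 1) * Real.exp (-σ * t ^ ρ) *
          (t ^ ρ - a ^ ρ) ^ (β - α) := by
  intro t ht
  have hat : a < t := ht.1
  have ht0 : 0 < t := ha.trans hat
  have hTA : a ^ ρ < t ^ ρ := Real.rpow_lt_rpow ha.le hat hρ
  have hTA' : 0 < t ^ ρ - a ^ ρ := sub_pos.mpr hTA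
  set K := Real.Gamma (β + 1) / Real.Gamma (β - α + 2) with hK
  set γ := β - α + 1 with hγ
  set g : ℝ → ℝ := fun x =>
      K * (Real.exp (-σ * x ^ ρ) * (x ^ ρ - a ^ ρ) ^ γ) with hg
  have hFg : subI σ ρ (1 - α) a
      (fun s => (s ^ ρ - a ^ ρ) ^ β * Real.exp (-σ * s ^ ρ)) =ᶠ[nhds t] g :=
    Filter.eventuallyEq_of_mem (Ioi_mem_nhds hat)
      (subI_closed σ ρ α β a hρ hα₁ hα₂ hβ ha)
  -- derivative of g
  have hT : HasDerivAt (fun x : ℝ => x ^ ρ) (ρ * t ^ (ρ - 1)) t :=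
    Real.hasDerivAt_rpow_const (Or.inl ht0.ne')
  have hE : HasDerivAt (fun x : ℝ => Real.exp (-σ * x ^ ρ))
      (Real.exp (-σ * t ^ ρ) * (-σ * (ρ * t ^ (ρ - 1)))) t :=
    (hT.const_mul (-σ)).exp
  have hR : HasDerivAt (fun x : ℝ => (x ^ ρ - a ^ ρ) ^ γ)
      (ρ * t ^ (ρ - 1) * γ * (t ^ ρ - a ^ ρ) ^ (γ - 1)) t :=
    (hT.sub_const (a ^ ρ)).rpow_const (Or.inl hTA'.ne')
  have hgderiv : HasDerivAt g
      (K * (Real.exp (-σ * t ^ ρ) * (-σ * (ρ * t ^ (ρ - 1))) * (t ^ ρ - a ^ ρ) ^ γ +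
        Real.exp (-σ * t ^ ρ) * (ρ * t ^ (ρ - 1) * γ * (t ^ ρ - a ^ ρ) ^ (γ - 1)))) t :=
    (hE.mul hR).const_mul K
  have hderiv := hFg.deriv_eq.trans hgderiv.deriv
  have hFt := subI_closed σ ρ α β a hρ hα₁ hα₂ hβ ha t hat
  rw [subD, hderiv, hFt]
  have hpow : t ^ (1 - ρ) * t ^ (ρ - 1) = 1 := by
    rw [← Real.rpow_add ht0, show (1 - ρ) + (ρ - 1) = 0 by ring, Real.rpow_zero]
  have hγ1 : γ - 1 = β - α := by rw [hγ]; ring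
  have hKγ : K * γ = Real.Gamma (β + 1) / Real.Gamma (β - α + 1) := by
    have hpos : (0:ℝ) < β - α + 1 := by linarith
    rw [hK, hγ, show β - α + 2 = (β - α + 1) + 1 by ring,
      Real.Gamma_add_one hpos.ne']
    field_simp [(Real.Gamma_pos_of_pos hpos).ne']
  rw [hγ1]
  have expand : t ^ (1 - ρ) / ρ *
      (K * (Real.exp (-σ * t ^ ρ) * (-σ * (ρ * t ^ (ρ - 1))) * (t ^ ρ - a ^ ρ) ^ γ +
        Real.exp (-σ * t ^ ρ) * (ρ * t ^ (ρ - 1) * γ * (t ^ ρ - a ^ ρ) ^ (β - α)))) +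
      σ * (K * (Real.exp (-σ * t ^ ρ) * (t ^ ρ - a ^ ρ) ^ γ))
      = (t ^ (1 - ρ) * t ^ (ρ - 1)) *
        (K * γ * Real.exp (-σ * t ^ ρ) * (t ^ ρ - a ^ ρ) ^ (β - α)) +
        ((t ^ (1 - ρ) * t ^ (ρ - 1)) - 1) *
          (-σ * K * Real.exp (-σ * t ^ ρ) * (t ^ ρ - a ^ ρ) ^ γ) := by
    field_simp
    ring
  rw [expand, hpow, hKγ]
  ring
end

section
/- Let σ > 0, ρ > 0, α > 0 with m = ⌈α⌉, and let b_0, …, b_{m-1} ∈ ℝ, K > 0, h* > 0. Let H = { (t, y) : 0 ≤ t ≤ h*, |y − e^{-σ t^ρ} Σ_{k=0}^{m-1} (b_k/k!) t^{ρk}| ≤ K }, and let f : H → ℝ be continuous with |f(t,y)| ≤ M on H and |f(t,y₁) − f(t,y₂)| ≤ L|y₁ − y₂| for all (t,y₁), (t,y₂) ∈ H. Let h > 0 satisfy h ≤ h*, L h^{ρα} < Γ(α+1), and M h^{ρα} ≤ Γ(α+1) K. Then there exists a unique continuous function ψ : [0,h] → ℝ satisfying the Volterra equation ψ(t) = e^{-σ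 t^ρ} Σ_{k=0}^{m-1} (b_k/k!) t^{ρk} + (ρ/Γ(α)) ∫_0^t s^{ρ-1} (t^ρ − s^ρ)^{α-1} e^{-σ(t^ρ − s^ρ)} f(s, ψ(s)) ds for all t ∈ [0,h]. -/
/-!
The substitution `u = s ^ ρ` turns the equation into the Abel-type Volterra equation
`χ x = G x + Γ(α)⁻¹ ∫₀ˣ (x - u)^(α-1) e^(-σ (x - u)) Φ(u, χ u) du` on `[0, h^ρ]`, with
`χ (t ^ ρ) = ψ t`. Since `∫₀ˣ (x - u)^(α-1) du = x^α / α`, the right-hand side maps the closed ball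
of radius `K` about `G` in `C([0, h^ρ])` into itself when `M h^(ρα) ≤ Γ(α+1) K` and contracts it
when `L h^(ρα) < Γ(α+1)`, so Banach's fixed point theorem gives a unique solution in the ball.
Every continuous solution stays in that ball: while it stays within `K` of `G` up to time `c`,
its distance from `G` is at most `M c^α / Γ(α+1)`, which is `< K` for `c < h^ρ`.
-/

open Real MeasureTheory Set Filter

lemma integral_mul_rpow_sub_one_comp_rpow {ρ t : ℝ} (hρ : 0 < ρ) (ht : 0 ≤ t) (g : ℝ → ℝ) :
    ∫ s in (0 : ℝ)..t, ρ * s ^ (ρ - 1) * g (s ^ ρ) = ∫ u in (0 : ℝ)..t ^ ρ, g u := by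
  have h := integral_Icc_deriv_smul_of_deriv_nonneg (f := fun s : ℝ => s ^ ρ)
    (f' := fun s => ρ * s ^ (ρ - 1)) (g := g) (continuous_rpow_const hρ.le).continuousOn
    (fun s hs => hasDerivAt_rpow_const (Or.inl hs.1.ne'))
    (fun s hs => mul_nonneg hρ.le (rpow_nonneg hs.1.le _)) ht
  simp only [smul_eq_mul, zero_rpow hρ.ne'] at h
  rw [intervalIntegral.integral_of_le ht, intervalIntegral.integral_of_le (by positivity),
    ← integral_Icc_eq_integral_Ioc, ← integral_Icc_eq_integral_Ioc, h]

noncomputable def abelIntegral (α : ℝ) (k g : ℝ → ℝ) (x : ℝ) : ℝ :=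
  ∫ u in (0 : ℝ)..x, (x - u) ^ (α - 1) * k (x - u) * g u

section AbelIntegral

variable {α x X D : ℝ} {k g g₁ g₂ : ℝ → ℝ}

lemma abelIntegral_eq_rpow_mul (hα : 0 < α) (hx : 0 ≤ x) :
    abelIntegral α k g x = x ^ α * ∫ w in (0 : ℝ)..1, w ^ (α - 1) * k (x * w) * g (x - x * w) := by
  rcases hx.eq_or_lt with rfl | hx
  · simp [abelIntegral, zero_rpow hα.ne']
  have hflip : abelIntegral α k g x = ∫ v in (0 : ℝ)..x, v ^ (α - 1) * k v * g (x - v) := by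
    simpa [abelIntegral] using intervalIntegral.integral_comp_sub_left
      (fun v => v ^ (α - 1) * k v * g (x - v)) (a := 0) (b := x) x
  have hscale := intervalIntegral.smul_integral_comp_mul_left
    (fun v => v ^ (α - 1) * k v * g (x - v)) (a := 0) (b := 1) x
  simp only [mul_zero, mul_one, smul_eq_mul] at hscale
  rw [hflip, ← hscale, intervalIntegral.integral_congr (g := fun w => x ^ (α - 1) *
    (w ^ (α - 1) * k (x * w) * g (x - x * w))) fun w hw => ?_,
    intervalIntegral.integral_const_mul, ← mul_assoc, ← rpow_one_add' hx.le (by linarith)]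
  · rw [add_sub_cancel]
  · rw [uIcc_of_le zero_le_one] at hw
    simp only [mul_rpow hx.le hw.1]
    ring

lemma abs_abelIntegral_le (hα : 0 < α) (hx : 0 ≤ x)
    (hk : ∀ v ∈ Ioc 0 x, |k v| ≤ 1) (hg : ∀ u ∈ Ico 0 x, |g u| ≤ D) :
    |abelIntegral α k g x| ≤ D * x ^ α / α := by
  rcases hx.eq_or_lt with rfl | hx
  · simp [abelIntegral, zero_rpow hα.ne']
  have hint : ∫ w in (0 : ℝ)..1, w ^ (α - 1) * D = D / α := by
    rw [intervalIntegral.integral_mul_const, integral_rpow (Or.inl (by linarith))]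
    rw [sub_add_cancel, one_rpow, zero_rpow hα.ne', sub_zero]
    ring
  have hJ : |∫ w in (0 : ℝ)..1, w ^ (α - 1) * k (x * w) * g (x - x * w)| ≤ D / α := by
    rw [← hint, ← Real.norm_eq_abs]
    refine intervalIntegral.norm_integral_le_of_norm_le zero_le_one
      (Eventually.of_forall fun w hw => ?_)
      ((intervalIntegral.intervalIntegrable_rpow' (by linarith : -1 < α - 1)).mul_const D)
    have hw0 : 0 < w := hw.1
    have hkw := hk (x * w) ⟨by nlinarith [hw.1], by nlinarith [hw.2]⟩
    have hgw := hg (x - x * w) ⟨by nlinarith [hw.2], by nlinarith [hw.1]⟩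
    rw [Real.norm_eq_abs, abs_mul, abs_mul, abs_of_nonneg (rpow_nonneg hw.1.le _)]
    calc w ^ (α - 1) * |k (x * w)| * |g (x - x * w)| ≤ w ^ (α - 1) * 1 * D := by gcongr
      _ = w ^ (α - 1) * D := by ring
  rw [abelIntegral_eq_rpow_mul hα hx.le, abs_mul, abs_of_nonneg (by positivity)]
  calc x ^ α * |∫ w in (0 : ℝ)..1, w ^ (α - 1) * k (x * w) * g (x - x * w)|
      ≤ x ^ α * (D / α) := by gcongr
    _ = D * x ^ α / α := by ring

lemma continuousOn_abelIntegral (hα : 0 < α) (hk : ContinuousOn k (Icc 0 X))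
    (hg : ContinuousOn g (Icc 0 X)) : ContinuousOn (abelIntegral α k g) (Icc 0 X) := by
  -- after `u = x - x * w` the domain of integration no longer depends on `x`
  have hmaps : ∀ x ∈ Icc 0 X, ∀ w ∈ Icc (0 : ℝ) 1, x * w ∈ Icc 0 X ∧ x - x * w ∈ Icc 0 X :=
    fun x hx w hw => ⟨⟨by nlinarith [hx.1, hw.1], by nlinarith [hx.1, hx.2, hw.2]⟩,
      ⟨by nlinarith [hx.1, hw.2], by nlinarith [hx.1, hx.2, hw.1]⟩⟩
  obtain ⟨Ck, hCk⟩ := isCompact_Icc.exists_bound_of_continuousOn hk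
  obtain ⟨Cg, hCg⟩ := isCompact_Icc.exists_bound_of_continuousOn hg
  have hJ : ContinuousOn (fun x => ∫ w in (0 : ℝ)..1, w ^ (α - 1) * k (x * w) * g (x - x * w))
      (Icc 0 X) := by
    intro x₀ hx₀
    refine intervalIntegral.continuousWithinAt_of_dominated_interval
      (bound := fun w => w ^ (α - 1) * (Ck * Cg)) ?_ ?_
      ((intervalIntegral.intervalIntegrable_rpow' (by linarith : -1 < α - 1)).mul_const _)
      (Eventually.of_forall fun w hw => ?_)
    · filter_upwards [self_mem_nhdsWithin] with x hx
      rw [uIoc_of_le zero_le_one]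
      refine ContinuousOn.aestronglyMeasurable ?_ measurableSet_Ioc
      exact ((continuousOn_id.rpow_const fun w hw => Or.inl hw.1.ne').mul
        (hk.comp (continuousOn_const.mul continuousOn_id)
          fun w hw => (hmaps x hx w (Ioc_subset_Icc_self hw)).1)).mul
        (hg.comp (continuousOn_const.sub (continuousOn_const.mul continuousOn_id))
          fun w hw => (hmaps x hx w (Ioc_subset_Icc_self hw)).2)
    · filter_upwards [self_mem_nhdsWithin] with x hx
      refine Eventually.of_forall fun w hw => ?_
      rw [uIoc_of_le zero_le_one] at hw
      obtain ⟨hkw, hgw⟩ := hmaps x hx w (Ioc_subset_Icc_self hw)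
      have hw0 : 0 < w := hw.1
      rw [norm_mul, norm_mul, Real.norm_of_nonneg (by positivity), mul_assoc]
      gcongr
      · exact (norm_nonneg _).trans (hCk _ hkw)
      · exact hCk _ hkw
      · exact hCg _ hgw
    · rw [uIoc_of_le zero_le_one] at hw
      have hmaps' : ∀ x ∈ Icc 0 X, x * w ∈ Icc 0 X ∧ x - x * w ∈ Icc 0 X :=
        fun x hx => hmaps x hx w (Ioc_subset_Icc_self hw)
      exact (continuousWithinAt_const.mul ((hk.comp (continuousOn_id.mul continuousOn_const)
        fun x hx => (hmaps' x hx).1) x₀ hx₀)).mul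
        ((hg.comp (continuousOn_id.sub (continuousOn_id.mul continuousOn_const))
          fun x hx => (hmaps' x hx).2) x₀ hx₀)
  exact ((continuous_rpow_const hα.le).continuousOn.mul hJ).congr
    fun x hx => abelIntegral_eq_rpow_mul hα hx.1

lemma intervalIntegrable_abelIntegrand (hα : 0 < α) (hx : 0 ≤ x) (hk : ContinuousOn k (Icc 0 x))
    (hg : ContinuousOn g (Icc 0 x)) :
    IntervalIntegrable (fun u => (x - u) ^ (α - 1) * k (x - u) * g u) volume 0 x := by
  have hpow : IntervalIntegrable (fun u => (x - u) ^ (α - 1)) volume 0 x := by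
    simpa using (intervalIntegral.intervalIntegrable_rpow' (by linarith : -1 < α - 1)
      (a := x) (b := 0)).comp_sub_left x
  have hmaps : MapsTo (fun u => x - u) (uIcc 0 x) (uIcc 0 x) := fun u hu => by
    rw [uIcc_of_le hx] at hu ⊢
    exact ⟨by linarith [hu.2], by linarith [hu.1]⟩
  rw [← uIcc_of_le hx] at hk hg
  exact (hpow.mul_continuousOn (hk.comp (by fun_prop) hmaps)).mul_continuousOn hg

lemma abelIntegral_sub (hα : 0 < α) (hx : 0 ≤ x) (hk : ContinuousOn k (Icc 0 x))
    (hg₁ : ContinuousOn g₁ (Icc 0 x)) (hg₂ : ContinuousOn g₂ (Icc 0 x)) :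
    abelIntegral α k g₁ x - abelIntegral α k g₂ x = abelIntegral α k (fun u => g₁ u - g₂ u) x := by
  rw [abelIntegral, abelIntegral, abelIntegral, ← intervalIntegral.integral_sub
    (intervalIntegrable_abelIntegrand hα hx hk hg₁) (intervalIntegrable_abelIntegrand hα hx hk hg₂)]
  simp only [mul_sub]

lemma abelIntegral_congr (hx : 0 ≤ x) (h : EqOn g₁ g₂ (Icc 0 x)) :
    abelIntegral α k g₁ x = abelIntegral α k g₂ x :=
  intervalIntegral.integral_congr fun u hu => by
    rw [uIcc_of_le hx] at hu
    simp only [h hu]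

lemma abs_gamma_inv_mul_abelIntegral_le (hα : 0 < α) (hx : 0 ≤ x)
    (hk : ∀ v ∈ Ioc 0 x, |k v| ≤ 1) (hg : ∀ u ∈ Ico 0 x, |g u| ≤ D) :
    |(Gamma α)⁻¹ * abelIntegral α k g x| ≤ D * x ^ α / Gamma (α + 1) := by
  have hΓ := Gamma_pos_of_pos hα
  rw [abs_mul, abs_inv, abs_of_pos hΓ, Gamma_add_one hα.ne', inv_mul_le_iff₀ hΓ]
  calc _ ≤ D * x ^ α / α := abs_abelIntegral_le hα hx hk hg
    _ = _ := by field_simp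

end AbelIntegral

lemma forall_le_of_bootstrap {ω : ℝ → ℝ} {a b K : ℝ} (hω : ContinuousOn ω (Ico a b))
    (hstep : ∀ c ∈ Ico a b, (∀ u ∈ Ico a c, ω u ≤ K) → ω c < K) : ∀ u ∈ Ico a b, ω u ≤ K := by
  by_contra! ⟨u₀, hu₀, hKu₀⟩
  set B := {u ∈ Ico a b | K < ω u}
  have hBne : B.Nonempty := ⟨u₀, hu₀, hKu₀⟩
  have hBbdd : BddBelow B := ⟨a, fun u hu => hu.1.1⟩
  have hc : sInf B ∈ Ico a b :=
    ⟨le_csInf hBne fun u hu => hu.1.1, (csInf_le hBbdd ⟨hu₀, hKu₀⟩).trans_lt hu₀.2⟩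
  have hbelow : ∀ u ∈ Ico a (sInf B), ω u ≤ K := fun u hu =>
    not_lt.1 fun hKu => (csInf_le hBbdd ⟨⟨hu.1, hu.2.trans hc.2⟩, hKu⟩).not_gt hu.2
  obtain ⟨δ, hδ, hball⟩ := Metric.mem_nhdsWithin_iff.1
    (hω _ hc (Iio_mem_nhds (hstep _ hc hbelow)))
  obtain ⟨u, huB, hu⟩ := exists_lt_of_csInf_lt hBne (lt_add_of_pos_right (sInf B) hδ)
  have hdist : dist u (sInf B) < δ := by
    rw [Real.dist_eq, abs_of_nonneg (sub_nonneg.2 (csInf_le hBbdd huB))]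
    linarith
  exact (hball ⟨hdist, huB.1⟩ : ω u < K).not_gt huB.2

theorem exists_eqOn_unique_of_contracting {a b K q : ℝ} {G : ℝ → ℝ} {T : (ℝ → ℝ) → ℝ → ℝ}
    (hab : a ≤ b) (hK : 0 ≤ K) (hq : q < 1) (hG : ContinuousOn G (Icc a b))
    (hT : ∀ χ, ContinuousOn χ (Icc a b) → (∀ x ∈ Icc a b, |χ x - G x| ≤ K) →
      ContinuousOn (T χ) (Icc a b) ∧ ∀ x ∈ Icc a b, |T χ x - G x| ≤ K)
    (hlocal : ∀ χ₁ χ₂, EqOn χ₁ χ₂ (Icc a b) → EqOn (T χ₁) (T χ₂) (Icc a b))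
    (hcontr : ∀ χ₁ χ₂ d, ContinuousOn χ₁ (Icc a b) → (∀ x ∈ Icc a b, |χ₁ x - G x| ≤ K) →
      ContinuousOn χ₂ (Icc a b) → (∀ x ∈ Icc a b, |χ₂ x - G x| ≤ K) →
      (∀ x ∈ Icc a b, |χ₁ x - χ₂ x| ≤ d) → ∀ x ∈ Icc a b, |T χ₁ x - T χ₂ x| ≤ q * d) :
    ∃ χ, (ContinuousOn χ (Icc a b) ∧ EqOn χ (T χ) (Icc a b)) ∧
      ∀ χ', ContinuousOn χ' (Icc a b) → (∀ x ∈ Icc a b, |χ' x - G x| ≤ K) →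
        EqOn χ' (T χ') (Icc a b) → EqOn χ' χ (Icc a b) := by
  have hext : ∀ ξ : C(Icc a b, ℝ), ContinuousOn (IccExtend hab ξ) (Icc a b) :=
    fun ξ => ξ.continuous.Icc_extend'.continuousOn
  let B := Metric.closedBall (⟨_, hG.domRestrict⟩ : C(Icc a b, ℝ)) K
  have hB : ∀ ξ ∈ B, ∀ x ∈ Icc a b, |IccExtend hab ξ x - G x| ≤ K := fun ξ hξ x hx => by
    rw [IccExtend_of_mem hab ξ hx, ← Real.dist_eq]
    exact (ContinuousMap.dist_apply_le_dist ⟨x, hx⟩).trans hξ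
  let T' : B → B := fun ξ => ⟨⟨_, (hT _ (hext ξ) (hB ξ ξ.2)).1.domRestrict⟩,
    (ContinuousMap.dist_le hK).2 fun x => by
      rw [Real.dist_eq]
      exact (hT _ (hext ξ) (hB ξ ξ.2)).2 x x.2⟩
  have hT' : ContractingWith q.toNNReal T' := by
    refine ⟨Real.toNNReal_lt_one.2 hq, LipschitzWith.of_dist_le_mul fun ξ₁ ξ₂ => ?_⟩
    rw [Subtype.dist_eq, Subtype.dist_eq, ContinuousMap.dist_le (by positivity)]
    intro x
    rw [Real.dist_eq]
    refine (hcontr _ _ _ (hext ξ₁) (hB ξ₁ ξ₁.2) (hext ξ₂) (hB ξ₂ ξ₂.2) (fun y hy => ?_)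
      x x.2).trans
      (mul_le_mul_of_nonneg_right (Real.le_coe_toNNReal q) dist_nonneg)
    rw [IccExtend_of_mem hab _ hy, IccExtend_of_mem hab _ hy, ← Real.dist_eq]
    exact ContinuousMap.dist_apply_le_dist _
  have : Nonempty B := ⟨⟨_, Metric.mem_closedBall_self hK⟩⟩
  have : CompleteSpace B := Metric.isClosed_closedBall.completeSpace_coe
  set ξ := ContractingWith.fixedPoint T' hT'
  refine ⟨IccExtend hab ξ, ⟨hext ξ, fun x hx => ?_⟩, fun χ' hχ' htube hsol x hx => ?_⟩
  · calc IccExtend hab ξ x = (T' ξ : C(Icc a b, ℝ)) ⟨x, hx⟩ := by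
          rw [IccExtend_of_mem hab _ hx, hT'.fixedPoint_isFixedPt]
      _ = T (IccExtend hab ξ) x := rfl
  let ξ' : C(Icc a b, ℝ) := ⟨_, hχ'.domRestrict⟩
  have hξ' : ξ' ∈ B := (ContinuousMap.dist_le hK).2 fun y => by
    rw [Real.dist_eq]
    exact htube y y.2
  have hfix' : Function.IsFixedPt T' ⟨ξ', hξ'⟩ := Subtype.ext <| ContinuousMap.ext fun y =>
    (hlocal _ _ (fun u hu => IccExtend_of_mem hab ξ' hu) y.2).trans (hsol y.2).symm
  calc χ' x = ξ' ⟨x, hx⟩ := rfl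
    _ = ξ.1 ⟨x, hx⟩ :=
      congrArg (fun η : B => (η : C(Icc a b, ℝ)) ⟨x, hx⟩) (hT'.fixedPoint_unique hfix')
    _ = IccExtend hab ξ x := (IccExtend_of_mem hab _ hx).symm

def volterraTube (G : ℝ → ℝ) (X K : ℝ) : Set (ℝ × ℝ) :=
  {p | p.1 ∈ Icc 0 X ∧ |p.2 - G p.1| ≤ K}

noncomputable def volterraOp (α : ℝ) (k G : ℝ → ℝ) (Φ : ℝ → ℝ → ℝ) (χ : ℝ → ℝ) (x : ℝ) : ℝ :=
  G x + (Gamma α)⁻¹ * abelIntegral α k (fun u => Φ u (χ u)) x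

section Volterra

variable {α X x K M L : ℝ} {k G χ χ₁ χ₂ : ℝ → ℝ} {Φ : ℝ → ℝ → ℝ}

lemma volterraOp_congr (hx : 0 ≤ x) (h : EqOn χ₁ χ₂ (Icc 0 x)) :
    volterraOp α k G Φ χ₁ x = volterraOp α k G Φ χ₂ x := by
  rw [volterraOp, volterraOp, abelIntegral_congr (g₂ := fun u => Φ u (χ₂ u)) hx
    fun u hu => by simp only [h hu]]

lemma continuousOn_volterraOp (hα : 0 < α) (hk : ContinuousOn k (Icc 0 X))
    (hG : ContinuousOn G (Icc 0 X)) (hΦ : ContinuousOn (fun u => Φ u (χ u)) (Icc 0 X)) :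
    ContinuousOn (volterraOp α k G Φ χ) (Icc 0 X) :=
  hG.add (continuousOn_const.mul (continuousOn_abelIntegral hα hk hΦ))

lemma abs_volterraOp_sub_le (hα : 0 < α) (hx : 0 ≤ x) (hk : ∀ v ∈ Ioc 0 x, |k v| ≤ 1)
    (hΦ : ∀ u ∈ Ico 0 x, |Φ u (χ u)| ≤ M) :
    |volterraOp α k G Φ χ x - G x| ≤ M * x ^ α / Gamma (α + 1) := by
  rw [volterraOp, add_sub_cancel_left]
  exact abs_gamma_inv_mul_abelIntegral_le hα hx hk hΦ

lemma abs_volterraOp_sub_volterraOp_le {D : ℝ} (hα : 0 < α) (hx : 0 ≤ x)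
    (hk : ContinuousOn k (Icc 0 x)) (hk1 : ∀ v ∈ Ioc 0 x, |k v| ≤ 1)
    (hΦ₁ : ContinuousOn (fun u => Φ u (χ₁ u)) (Icc 0 x))
    (hΦ₂ : ContinuousOn (fun u => Φ u (χ₂ u)) (Icc 0 x))
    (hD : ∀ u ∈ Ico 0 x, |Φ u (χ₁ u) - Φ u (χ₂ u)| ≤ D) :
    |volterraOp α k G Φ χ₁ x - volterraOp α k G Φ χ₂ x| ≤ D * x ^ α / Gamma (α + 1) := by
  rw [volterraOp, volterraOp, add_sub_add_left_eq_sub, ← mul_sub,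
    abelIntegral_sub hα hx hk hΦ₁ hΦ₂]
  exact abs_gamma_inv_mul_abelIntegral_le hα hx hk1 hD

lemma mem_volterraTube_self (hx : x ∈ Icc 0 X) (hK : 0 ≤ K) : (x, G x) ∈ volterraTube G X K :=
  ⟨hx, by simpa using hK⟩

lemma mul_rpow_div_Gamma_le (hα : 0 < α) (hM0 : 0 ≤ M) (hM : M * X ^ α ≤ Gamma (α + 1) * K)
    (hx : x ∈ Icc 0 X) : M * x ^ α / Gamma (α + 1) ≤ K := by
  rw [div_le_iff₀ (Gamma_pos_of_pos (by linarith))]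
  calc M * x ^ α ≤ M * X ^ α := by gcongr; exacts [hx.1, hx.2]
    _ ≤ K * Gamma (α + 1) := hM.trans_eq (mul_comm _ _)

lemma abs_sub_le_of_eqOn_volterraOp (hα : 0 < α) (hK : 0 < K)
    (hk1 : ∀ v ∈ Icc 0 X, |k v| ≤ 1) (hG : ContinuousOn G (Icc 0 X))
    (hΦM : ∀ p ∈ volterraTube G X K, |Φ p.1 p.2| ≤ M) (hM : M * X ^ α ≤ Gamma (α + 1) * K)
    (hχ : ContinuousOn χ (Icc 0 X)) (hsol : EqOn χ (volterraOp α k G Φ χ) (Icc 0 X)) :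
    ∀ x ∈ Icc 0 X, |χ x - G x| ≤ K := by
  intro x hx
  have hM0 : 0 ≤ M :=
    (abs_nonneg _).trans (hΦM _ (mem_volterraTube_self ⟨le_rfl, hx.1.trans hx.2⟩ hK.le))
  have hbound : ∀ c ∈ Icc 0 X, (∀ u ∈ Ico 0 c, |χ u - G u| ≤ K) →
      |χ c - G c| ≤ M * c ^ α / Gamma (α + 1) := fun c hc hbelow => by
    rw [hsol hc]
    exact abs_volterraOp_sub_le hα hc.1 (fun v hv => hk1 v ⟨hv.1.le, hv.2.trans hc.2⟩)
      fun u hu => hΦM (u, χ u) ⟨⟨hu.1, hu.2.le.trans hc.2⟩, hbelow u hu⟩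
  have hIco : ∀ u ∈ Ico 0 X, |χ u - G u| ≤ K :=
    forall_le_of_bootstrap ((hχ.sub hG).abs.mono Ico_subset_Icc_self) fun c hc hbelow => by
      refine (hbound c (Ico_subset_Icc_self hc) hbelow).trans_lt ?_
      have hΓ : 0 < Gamma (α + 1) := Gamma_pos_of_pos (by linarith)
      rw [div_lt_iff₀ hΓ]
      rcases hM0.eq_or_lt with rfl | hM0
      · simpa using mul_pos hK hΓ
      · calc M * c ^ α < M * X ^ α := by gcongr; exacts [hc.1, hc.2]
          _ ≤ _ := hM.trans_eq (mul_comm _ _)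
  exact (hbound x hx fun u hu => hIco u ⟨hu.1, hu.2.trans_le hx.2⟩).trans
    (mul_rpow_div_Gamma_le hα hM0 hM hx)

theorem exists_eqOn_volterraOp_unique (hα : 0 < α) (hX : 0 ≤ X) (hK : 0 < K)
    (hk : ContinuousOn k (Icc 0 X)) (hk1 : ∀ v ∈ Icc 0 X, |k v| ≤ 1)
    (hG : ContinuousOn G (Icc 0 X))
    (hΦc : ContinuousOn (Function.uncurry Φ) (volterraTube G X K))
    (hΦM : ∀ p ∈ volterraTube G X K, |Φ p.1 p.2| ≤ M)
    (hΦL : ∀ u y₁ y₂, (u, y₁) ∈ volterraTube G X K → (u, y₂) ∈ volterraTube G X K →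
      |Φ u y₁ - Φ u y₂| ≤ L * |y₁ - y₂|)
    (hL : L * X ^ α < Gamma (α + 1)) (hM : M * X ^ α ≤ Gamma (α + 1) * K) :
    ∃ χ, (ContinuousOn χ (Icc 0 X) ∧ EqOn χ (volterraOp α k G Φ χ) (Icc 0 X)) ∧
      ∀ χ', ContinuousOn χ' (Icc 0 X) → EqOn χ' (volterraOp α k G Φ χ') (Icc 0 X) →
        EqOn χ' χ (Icc 0 X) := by
  have hG0 : (0, G 0) ∈ volterraTube G X K := mem_volterraTube_self ⟨le_rfl, hX⟩ hK.le
  have hM0 : 0 ≤ M := (abs_nonneg _).trans (hΦM _ hG0)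
  have hL0 : 0 ≤ L := by
    have h := hΦL 0 (G 0 + K) (G 0) ⟨⟨le_rfl, hX⟩, by simp [abs_of_pos hK]⟩ hG0
    rw [add_sub_cancel_left, abs_of_pos hK] at h
    exact nonneg_of_mul_nonneg_left ((abs_nonneg _).trans h) hK
  have hk1' : ∀ x ∈ Icc 0 X, ∀ v ∈ Ioc 0 x, |k v| ≤ 1 :=
    fun x hx v hv => hk1 v ⟨hv.1.le, hv.2.trans hx.2⟩
  have hΦχ : ∀ χ, (∀ x ∈ Icc 0 X, |χ x - G x| ≤ K) → ContinuousOn χ (Icc 0 X) →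
      ContinuousOn (fun u => Φ u (χ u)) (Icc 0 X) := fun χ htube hχ =>
    hΦc.comp (continuousOn_id.prodMk hχ) fun x hx => ⟨hx, htube x hx⟩
  obtain ⟨χ, hχ, huniq⟩ := exists_eqOn_unique_of_contracting (T := volterraOp α k G Φ) hX hK.le
    ((div_lt_one (Gamma_pos_of_pos (by linarith))).2 hL) hG
    (fun χ hχ htube => ⟨continuousOn_volterraOp hα hk hG (hΦχ χ htube hχ), fun x hx =>
      (abs_volterraOp_sub_le hα hx.1 (hk1' x hx) fun u hu =>
        hΦM (u, χ u) ⟨⟨hu.1, hu.2.le.trans hx.2⟩, htube u ⟨hu.1, hu.2.le.trans hx.2⟩⟩).trans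
      (mul_rpow_div_Gamma_le hα hM0 hM hx)⟩)
    (fun χ₁ χ₂ h x hx => volterraOp_congr hx.1 (h.mono (Icc_subset_Icc_right hx.2)))
    fun χ₁ χ₂ d hχ₁ htube₁ hχ₂ htube₂ hd x hx => by
      have hsub : Icc 0 x ⊆ Icc 0 X := Icc_subset_Icc_right hx.2
      have hd0 : 0 ≤ d := (abs_nonneg _).trans (hd 0 ⟨le_rfl, hX⟩)
      refine (abs_volterraOp_sub_volterraOp_le (D := L * d) hα hx.1 (hk.mono hsub) (hk1' x hx)
        ((hΦχ _ htube₁ hχ₁).mono hsub) ((hΦχ _ htube₂ hχ₂).mono hsub) fun u hu => ?_).trans ?_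
      · have hu : u ∈ Icc 0 X := hsub (Ico_subset_Icc_self hu)
        exact (hΦL u _ _ ⟨hu, htube₁ u hu⟩ ⟨hu, htube₂ u hu⟩).trans
          (mul_le_mul_of_nonneg_left (hd u hu) hL0)
      · rw [mul_right_comm, mul_div_right_comm]
        gcongr
        exacts [hx.1, hx.2]
  exact ⟨χ, hχ, fun χ' hχ' hsol =>
    huniq χ' hχ' (abs_sub_le_of_eqOn_volterraOp hα hK hk1 hG hΦM hM hχ' hsol) hsol⟩

end Volterra

lemma subI_zero_eq_gamma_inv_mul_abelIntegral {σ ρ α t : ℝ} (hρ : 0 < ρ) (ht : 0 ≤ t)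
    (F : ℝ → ℝ) :
    subI σ ρ α 0 F t = (Gamma α)⁻¹ *
      abelIntegral α (fun v => exp (-σ * v)) (fun u => F (u ^ ρ⁻¹)) (t ^ ρ) := by
  rw [subI, abelIntegral, ← integral_mul_rpow_sub_one_comp_rpow hρ ht, div_eq_inv_mul, mul_assoc,
    ← intervalIntegral.integral_const_mul]
  congr 1
  refine intervalIntegral.integral_congr fun s hs => ?_
  rw [uIcc_of_le ht] at hs
  simp only [rpow_rpow_inv hs.1 hρ.ne']
  ring

lemma add_subI_eq_volterraOp {σ ρ α t : ℝ} (hρ : 0 < ρ) (ht : 0 ≤ t) (g φ : ℝ → ℝ)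
    (f : ℝ → ℝ → ℝ) :
    g t + subI σ ρ α 0 (fun s => f s (φ s)) t =
      volterraOp α (fun v => exp (-σ * v)) (fun u => g (u ^ ρ⁻¹)) (fun u y => f (u ^ ρ⁻¹) y)
        (fun u => φ (u ^ ρ⁻¹)) (t ^ ρ) := by
  rw [subI_zero_eq_gamma_inv_mul_abelIntegral hρ ht, volterraOp, rpow_rpow_inv ht hρ.ne']

theorem exists_unique_continuousOn_eq_add_subI {σ ρ α h K M L : ℝ} {g : ℝ → ℝ}
    {f : ℝ → ℝ → ℝ} (hσ : 0 ≤ σ) (hρ : 0 < ρ) (hα : 0 < α) (hK : 0 < K) (hh : 0 ≤ h)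
    (hg : ContinuousOn g (Icc 0 h))
    (hfc : ContinuousOn (Function.uncurry f) (volterraTube g h K))
    (hfM : ∀ p ∈ volterraTube g h K, |f p.1 p.2| ≤ M)
    (hfL : ∀ t y₁ y₂, (t, y₁) ∈ volterraTube g h K → (t, y₂) ∈ volterraTube g h K →
      |f t y₁ - f t y₂| ≤ L * |y₁ - y₂|)
    (hL : L * h ^ (ρ * α) < Gamma (α + 1)) (hM : M * h ^ (ρ * α) ≤ Gamma (α + 1) * K) :
    ∃ ψ : ℝ → ℝ, (ContinuousOn ψ (Icc 0 h) ∧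
        ∀ t ∈ Icc 0 h, ψ t = g t + subI σ ρ α 0 (fun s => f s (ψ s)) t) ∧
      ∀ φ : ℝ → ℝ, (ContinuousOn φ (Icc 0 h) ∧
          ∀ t ∈ Icc 0 h, φ t = g t + subI σ ρ α 0 (fun s => f s (φ s)) t) →
        ∀ t ∈ Icc 0 h, φ t = ψ t := by
  have hpow : MapsTo (· ^ ρ) (Icc 0 h) (Icc 0 (h ^ ρ)) := fun t ht =>
    ⟨rpow_nonneg ht.1 ρ, rpow_le_rpow ht.1 ht.2 hρ.le⟩
  have hroot : MapsTo (· ^ ρ⁻¹) (Icc 0 (h ^ ρ)) (Icc 0 h) := fun u hu =>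
    ⟨rpow_nonneg hu.1 _, (rpow_le_rpow hu.1 hu.2 (inv_nonneg.2 hρ.le)).trans_eq
      (rpow_rpow_inv hh hρ.ne')⟩
  have htube : MapsTo (fun p : ℝ × ℝ => (p.1 ^ ρ⁻¹, p.2))
      (volterraTube (fun u => g (u ^ ρ⁻¹)) (h ^ ρ) K) (volterraTube g h K) :=
    fun p hp => ⟨hroot hp.1, hp.2⟩
  have hroot_cont : ContinuousOn (· ^ ρ⁻¹) (Icc 0 (h ^ ρ)) :=
    (continuous_rpow_const (inv_nonneg.2 hρ.le)).continuousOn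
  obtain ⟨χ, hχ, huniq⟩ := exists_eqOn_volterraOp_unique (k := fun v => exp (-σ * v))
    (G := fun u => g (u ^ ρ⁻¹)) (Φ := fun u y => f (u ^ ρ⁻¹) y) hα (rpow_nonneg hh ρ) hK
    (by fun_prop) (fun v hv => by simpa [abs_of_pos (exp_pos _)] using mul_nonneg hσ hv.1)
    (hg.comp hroot_cont hroot)
    (hfc.comp ((hroot_cont.comp continuousOn_fst fun p hp => hp.1).prodMk continuousOn_snd) htube)
    (fun p hp => hfM _ (htube hp))
    (fun u y₁ y₂ h₁ h₂ => hfL _ y₁ y₂ (htube h₁) (htube h₂))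
    (by rwa [← rpow_mul hh]) (by rwa [← rpow_mul hh])
  refine ⟨fun t => χ (t ^ ρ), ⟨hχ.1.comp (continuous_rpow_const hρ.le).continuousOn hpow,
    fun t ht => ?_⟩, fun φ ⟨hφc, hφ⟩ t ht => ?_⟩
  · rw [add_subI_eq_volterraOp hρ ht.1]
    exact (hχ.2 (hpow ht)).trans
      (volterraOp_congr (hpow ht).1 fun u hu => by simp only [rpow_inv_rpow hu.1 hρ.ne'])
  · have hsol : EqOn (fun u => φ (u ^ ρ⁻¹))
        (volterraOp α _ _ _ (fun u => φ (u ^ ρ⁻¹))) (Icc 0 (h ^ ρ)) := fun u hu => by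
      simp only
      rw [hφ _ (hroot hu), add_subI_eq_volterraOp hρ (hroot hu).1, rpow_inv_rpow hu.1 hρ.ne']
    have := huniq (fun u => φ (u ^ ρ⁻¹)) (hφc.comp hroot_cont hroot) hsol (hpow ht)
    simpa only [rpow_rpow_inv ht.1 hρ.ne'] using this

theorem stmt18_general (σ ρ α K hstar M L h : ℝ) (hσ : 0 < σ) (hρ : 0 < ρ) (hα : 0 < α)
    (hK : 0 < K) (m : ℕ)
    (bc : ℕ → ℝ) (f : ℝ → ℝ → ℝ)
    (H : Set (ℝ × ℝ))
    (hH : H = {p : ℝ × ℝ | 0 ≤ p.1 ∧ p.1 ≤ hstar ∧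
      |p.2 - Real.exp (-σ * p.1 ^ ρ) *
        ∑ k ∈ Finset.range m, bc k / (k.factorial : ℝ) * (p.1 ^ ρ) ^ k| ≤ K})
    (hfc : ContinuousOn (fun p : ℝ × ℝ => f p.1 p.2) H)
    (hfM : ∀ p ∈ H, |f p.1 p.2| ≤ M)
    (hfL : ∀ t y₁ y₂ : ℝ, (t, y₁) ∈ H → (t, y₂) ∈ H → |f t y₁ - f t y₂| ≤ L * |y₁ - y₂|)
    (hh : 0 < h) (hh1 : h ≤ hstar) (hh2 : L * h ^ (ρ * α) < Real.Gamma (α + 1))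
    (hh3 : M * h ^ (ρ * α) ≤ Real.Gamma (α + 1) * K) :
    ∃ ψ : ℝ → ℝ,
      (ContinuousOn ψ (Set.Icc 0 h) ∧ ∀ t ∈ Set.Icc (0 : ℝ) h,
        ψ t = Real.exp (-σ * t ^ ρ) *
            (∑ k ∈ Finset.range m, bc k / (k.factorial : ℝ) * (t ^ ρ) ^ k) +
          ρ / Real.Gamma α * ∫ s in (0 : ℝ)..t, s ^ (ρ - 1) * (t ^ ρ - s ^ ρ) ^ (α - 1) *
            Real.exp (-σ * (t ^ ρ - s ^ ρ)) * f s (ψ s)) ∧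
      ∀ φ : ℝ → ℝ,
        (ContinuousOn φ (Set.Icc 0 h) ∧ ∀ t ∈ Set.Icc (0 : ℝ) h,
          φ t = Real.exp (-σ * t ^ ρ) *
              (∑ k ∈ Finset.range m, bc k / (k.factorial : ℝ) * (t ^ ρ) ^ k) +
            ρ / Real.Gamma α * ∫ s in (0 : ℝ)..t, s ^ (ρ - 1) * (t ^ ρ - s ^ ρ) ^ (α - 1) *
              Real.exp (-σ * (t ^ ρ - s ^ ρ)) * f s (φ s)) →
        ∀ t ∈ Set.Icc (0 : ℝ) h, φ t = ψ t := by
  have hsub : volterraTube (fun t => exp (-σ * t ^ ρ) *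
      ∑ k ∈ Finset.range m, bc k / (k.factorial : ℝ) * (t ^ ρ) ^ k) h K ⊆ H := fun p hp => by
    rw [hH]
    exact ⟨hp.1.1, hp.1.2.trans hh1, hp.2⟩
  have hr : Continuous fun t : ℝ => t ^ ρ := continuous_rpow_const hρ.le
  exact exists_unique_continuousOn_eq_add_subI hσ.le hρ hα hK hh.le (by fun_prop)
    (hfc.mono hsub) (fun p hp => hfM p (hsub hp))
    (fun t y₁ y₂ h₁ h₂ => hfL t y₁ y₂ (hsub h₁) (hsub h₂)) hh2 hh3

theorem stmt18 (σ ρ α K hstar M L h : ℝ) (hσ : 0 < σ) (hρ : 0 < ρ) (hα : 0 < α)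
    (hK : 0 < K) (hhstar : 0 < hstar) (m : ℕ) (hm : m = ⌈α⌉₊)
    (bc : ℕ → ℝ) (f : ℝ → ℝ → ℝ)
    (H : Set (ℝ × ℝ))
    (hH : H = {p : ℝ × ℝ | 0 ≤ p.1 ∧ p.1 ≤ hstar ∧
      |p.2 - Real.exp (-σ * p.1 ^ ρ) *
        ∑ k ∈ Finset.range m, bc k / (k.factorial : ℝ) * (p.1 ^ ρ) ^ k| ≤ K})
    (hfc : ContinuousOn (fun p : ℝ × ℝ => f p.1 p.2) H)
    (hfM : ∀ p ∈ H, |f p.1 p.2| ≤ M)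
    (hfL : ∀ t y₁ y₂ : ℝ, (t, y₁) ∈ H → (t, y₂) ∈ H → |f t y₁ - f t y₂| ≤ L * |y₁ - y₂|)
    (hh : 0 < h) (hh1 : h ≤ hstar) (hh2 : L * h ^ (ρ * α) < Real.Gamma (α + 1))
    (hh3 : M * h ^ (ρ * α) ≤ Real.Gamma (α + 1) * K) :
    ∃ ψ : ℝ → ℝ,
      (ContinuousOn ψ (Set.Icc 0 h) ∧ ∀ t ∈ Set.Icc (0 : ℝ) h,
        ψ t = Real.exp (-σ * t ^ ρ) *
            (∑ k ∈ Finset.range m, bc k / (k.factorial : ℝ) * (t ^ ρ) ^ k) +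
          ρ / Real.Gamma α * ∫ s in (0 : ℝ)..t, s ^ (ρ - 1) * (t ^ ρ - s ^ ρ) ^ (α - 1) *
            Real.exp (-σ * (t ^ ρ - s ^ ρ)) * f s (ψ s)) ∧
      ∀ φ : ℝ → ℝ,
        (ContinuousOn φ (Set.Icc 0 h) ∧ ∀ t ∈ Set.Icc (0 : ℝ) h,
          φ t = Real.exp (-σ * t ^ ρ) *
              (∑ k ∈ Finset.range m, bc k / (k.factorial : ℝ) * (t ^ ρ) ^ k) +
            ρ / Real.Gamma α * ∫ s in (0 : ℝ)..t, s ^ (ρ - 1) * (t ^ ρ - s ^ ρ) ^ (α - 1) *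
              Real.exp (-σ * (t ^ ρ - s ^ ρ)) * f s (φ s)) →
        ∀ t ∈ Set.Icc (0 : ℝ) h, φ t = ψ t :=
  stmt18_general σ ρ α K hstar M L h hσ hρ hα hK m bc f H hH hfc hfM hfL hh hh1 hh2 hh3
end
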